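/- arXiv:math/0701081 — 3 statements merged into one kernel-verified Lean document; each statement's English description precedes it below -/
import Mathlib

section
/- Fix 0 < β ≤ 1 and b > 0. For a nonnegative integrable function f on ℝ^d define the moments m_κ = ∫_{ℝ^d} f(v) |v|^{2κ} dv and the normalized moments z_κ = m_κ/Γ(κ+b). Then there exists a constant C_b depending only on b (and β) such that for every k ≥ 1, S_k := Σ_{j=1}^{⌊(k+1)/2⌋} binom(k,j) ( m_{j+β/2} m_{k−j} + m_{k−j+β/2} m_j ) ≤ C_b Γ(k + β/2 + 2b) Z_k, where Z_k = max_{1 ≤ j ≤ ⌊(k+1)/2⌋} { z_{j+β/2} z_{k−j}, z_j z_{k−j+β/2} } and binom(k,j) = Γ(k+1)/(Γ(j+1)Γ(k−j+1)). -/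
/-!
Writing `m_κ = z_κ Γ(κ + b)`, each product of moments in `S_k` is at most
`Z_k Γ(k + β/2 + 2b) B(j + β/2 + b, k - j + b)` (or the mirrored Beta value). With `n = ⌊k⌋`,
`binom(k, j) ≤ 2 binom(n, j)` for `2j ≤ k + 1`, and the Pascal rule
`B(x, y) = B(x + 1, y) + B(x, y + 1)` gives `∑_{j ≤ n} binom(n, j) B(a + j, c + n - j) = B(a, c)`.
Since `B(a, ·)` is decreasing by the log-convexity of `Γ`, the fractional part `k - n` of the
second argument can be dropped, and `S_k ≤ 4 B(β/2 + b, b) Γ(k + β/2 + 2b) Z_k`.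
-/

open MeasureTheory Real Filter Set
open scoped Topology

noncomputable section

/-- Velocity space ℝ^d with Euclidean structure. -/
abbrev Vel (d : ℕ) := EuclideanSpace ℝ (Fin d)

open Finset ProbabilityTheory

local notation "Γ" => Real.Gamma

theorem Finset.sum_antidiagonal_choose_mul_eq_of_pascal {R : Type*} [NonAssocSemiring R]
    (n : ℕ) {f : ℕ → ℕ → R} (hf : ∀ i j, f i j = f (i + 1) j + f i (j + 1)) :
    ∑ ij ∈ antidiagonal n, (n.choose ij.1 : R) * f ij.1 ij.2 = f 0 0 := by
  induction n generalizing f with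
  | zero => simp
  | succ n ih =>
    have hsymm : ∀ ij ∈ antidiagonal n, (n.choose ij.2 : R) * f (ij.1 + 1) ij.2 =
        n.choose ij.1 * f (ij.1 + 1) ij.2 := fun ij hij => by
      rw [Nat.choose_symm_of_eq_add (mem_antidiagonal.1 hij).symm]
    rw [sum_antidiagonal_choose_succ_mul, sum_congr rfl hsymm,
      ih (f := fun i j => f i (j + 1)) (fun i j => hf i (j + 1)),
      ih (f := fun i j => f (i + 1) j) (fun i j => hf (i + 1) j), hf 0 0, add_comm]

/-- `y'` and `y + a` are convex combinations of `y` and `y' + a` with swapped weights, so this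
follows from the log-convexity of `Γ`. -/
theorem Real.Gamma_mul_Gamma_add_le {a y y' : ℝ} (ha : 0 ≤ a) (hy : 0 < y) (hyy' : y ≤ y') :
    Γ y' * Γ (y + a) ≤ Γ y * Γ (y' + a) := by
  rcases ha.eq_or_lt with rfl | ha
  · simp [mul_comm]
  rcases hyy'.eq_or_lt with rfl | hyy'
  · rfl
  have hL : 0 < y' + a - y := by linarith
  obtain ⟨p, q, hp, hq, hpq, hy', hya⟩ : ∃ p q : ℝ, 0 < p ∧ 0 < q ∧ p + q = 1 ∧
      p * y + q * (y' + a) = y' ∧ q * y + p * (y' + a) = y + a :=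
    ⟨a / (y' + a - y), (y' - y) / (y' + a - y), div_pos ha hL, div_pos (by linarith) hL,
      by field_simp; ring, by field_simp; ring, by field_simp; ring⟩
  have hy'a : 0 < y' + a := by linarith
  have h₁ := Gamma_mul_add_mul_le_rpow_Gamma_mul_rpow_Gamma hy hy'a hp hq hpq
  have h₂ := Gamma_mul_add_mul_le_rpow_Gamma_mul_rpow_Gamma hy hy'a hq hp (by linarith)
  rw [hy'] at h₁
  rw [hya] at h₂
  calc Γ y' * Γ (y + a)
      ≤ (Γ y ^ p * Γ (y' + a) ^ q) * (Γ y ^ q * Γ (y' + a) ^ p) :=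
        mul_le_mul h₁ h₂ (Gamma_pos_of_pos (by linarith)).le (by positivity)
    _ = Γ y * Γ (y' + a) := by
        rw [mul_mul_mul_comm, ← rpow_add (Gamma_pos_of_pos hy),
          ← rpow_add (Gamma_pos_of_pos hy'a), hpq, add_comm q p, hpq, rpow_one, rpow_one]

namespace ProbabilityTheory

theorem beta_comm (x y : ℝ) : beta x y = beta y x := by
  rw [beta, beta, mul_comm, add_comm]

theorem beta_eq_beta_add_one_left_add_beta_add_one_right {x y : ℝ} (hx : 0 < x) (hy : 0 < y) :
    beta x y = beta (x + 1) y + beta x (y + 1) := by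
  have hxy : 0 < x + y := add_pos hx hy
  rw [beta, beta, beta, add_right_comm, ← add_assoc, Gamma_add_one hx.ne', Gamma_add_one hy.ne',
    Gamma_add_one hxy.ne']
  field_simp [(Gamma_pos_of_pos hxy).ne']

theorem beta_le_beta_of_le_right {a y y' : ℝ} (ha : 0 < a) (hy : 0 < y) (hyy' : y ≤ y') :
    beta a y' ≤ beta a y := by
  rw [beta, beta,
    div_le_div_iff₀ (Gamma_pos_of_pos (by linarith)) (Gamma_pos_of_pos (by linarith)), mul_assoc,
    mul_assoc, add_comm a, add_comm a]
  exact mul_le_mul_of_nonneg_left (Gamma_mul_Gamma_add_le ha.le hy hyy') (Gamma_pos_of_pos ha).le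

theorem sum_range_choose_mul_beta (n : ℕ) {a c : ℝ} (ha : 0 < a) (hc : 0 < c) :
    ∑ j ∈ range (n + 1), (n.choose j : ℝ) * beta (a + j) (c + (n - j : ℕ)) = beta a c := by
  have := sum_antidiagonal_choose_mul_eq_of_pascal n (f := fun i j => beta (a + i) (c + j))
    fun i j => by
      push_cast
      rw [← add_assoc, ← add_assoc]
      exact beta_eq_beta_add_one_left_add_beta_add_one_right (by positivity) (by positivity)
  simpa [Nat.sum_antidiagonal_eq_sum_range_succ
    (fun i j => (n.choose i : ℝ) * beta (a + i) (c + j))] using this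

end ProbabilityTheory

theorem Nat.choose_succ_le_two_mul_choose {n j : ℕ} (h : 2 * j ≤ n + 1) :
    (n + 1).choose j ≤ 2 * n.choose j := by
  refine Nat.le_of_mul_le_mul_right ?_ n.succ_pos
  calc (n + 1).choose j * (n + 1) ≤ (n + 1).choose j * (2 * (n + 1 - j)) :=
        Nat.mul_le_mul_left _ (by omega)
    _ = 2 * n.choose j * (n + 1) := by rw [mul_left_comm, ← Nat.choose_mul_succ_eq, mul_assoc]

def gammaBinom (k x : ℝ) : ℝ := Γ (k + 1) / (Γ (x + 1) * Γ (k - x + 1))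

theorem gammaBinom_pos {k x : ℝ} (hx : 0 ≤ x) (hxk : x < k + 1) : 0 < gammaBinom k x :=
  div_pos (Gamma_pos_of_pos (by linarith))
    (mul_pos (Gamma_pos_of_pos (by linarith)) (Gamma_pos_of_pos (by linarith)))

theorem gammaBinom_natCast {n j : ℕ} (h : j ≤ n) : gammaBinom n j = n.choose j := by
  rw [gammaBinom, ← Nat.cast_sub h, Gamma_nat_eq_factorial, Gamma_nat_eq_factorial,
    Gamma_nat_eq_factorial, Nat.cast_choose ℝ h]

theorem gammaBinom_le_gammaBinom {k k' x : ℝ} (hx : 0 ≤ x) (hxk : x < k + 1) (hkk' : k ≤ k') :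
    gammaBinom k x ≤ gammaBinom k' x := by
  have hΓ := Gamma_mul_Gamma_add_le hx (y := k - x + 1) (y' := k' - x + 1) (by linarith)
    (by linarith)
  rw [show k - x + 1 + x = k + 1 by ring, show k' - x + 1 + x = k' + 1 by ring] at hΓ
  have hΓx := Gamma_pos_of_pos (show 0 < x + 1 by linarith)
  rw [gammaBinom, gammaBinom, div_le_div_iff₀
    (mul_pos hΓx (Gamma_pos_of_pos (by linarith))) (mul_pos hΓx (Gamma_pos_of_pos (by linarith)))]
  calc Γ (k + 1) * (Γ (x + 1) * Γ (k' - x + 1)) = Γ (x + 1) * (Γ (k' - x + 1) * Γ (k + 1)) := by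
        ring
    _ ≤ Γ (x + 1) * (Γ (k - x + 1) * Γ (k' + 1)) := mul_le_mul_of_nonneg_left hΓ hΓx.le
    _ = Γ (k' + 1) * (Γ (x + 1) * Γ (k - x + 1)) := by ring

theorem gammaBinom_le_two_mul_choose {k : ℝ} {j : ℕ} (hj : 1 ≤ j) (h2j : 2 * (j : ℝ) ≤ k + 1) :
    gammaBinom k j ≤ 2 * ⌊k⌋₊.choose j := by
  set n := ⌊k⌋₊
  have hkn : k < n + 1 := Nat.lt_floor_add_one k
  have hj1 : (1 : ℝ) ≤ j := by exact_mod_cast hj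
  have h2jn : 2 * j ≤ n + 1 := by
    have : (2 * j : ℝ) < n + 2 := by linarith
    exact Nat.lt_succ_iff.1 (by exact_mod_cast this)
  calc gammaBinom k j ≤ gammaBinom ((n + 1 : ℕ) : ℝ) j :=
        gammaBinom_le_gammaBinom j.cast_nonneg (by linarith) (by push_cast; linarith)
    _ = (n + 1).choose j := gammaBinom_natCast (by omega)
    _ ≤ 2 * n.choose j := by exact_mod_cast Nat.choose_succ_le_two_mul_choose h2jn

theorem one_le_and_two_mul_le_of_mem_Icc_floor {k : ℝ} {j : ℕ}
    (hj : j ∈ Finset.Icc 1 ⌊(k + 1) / 2⌋₊) : 1 ≤ (j : ℝ) ∧ 2 * (j : ℝ) ≤ k + 1 := by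
  obtain ⟨h1, h2⟩ := Finset.mem_Icc.1 hj
  have := (Nat.le_floor_iff' (by omega)).1 h2
  exact ⟨by exact_mod_cast h1, by linarith⟩

theorem sum_gammaBinom_mul_beta_le {a c k : ℝ} (ha : 0 < a) (hc : 0 < c) (hk : 0 ≤ k) :
    ∑ j ∈ Finset.Icc 1 ⌊(k + 1) / 2⌋₊, gammaBinom k j * beta (j + a) (k - j + c) ≤
      2 * beta a c := by
  set n := ⌊k⌋₊
  have hnk : (n : ℝ) ≤ k := Nat.floor_le hk
  have hjn : ∀ j ∈ Finset.Icc 1 ⌊(k + 1) / 2⌋₊, j ≤ n := fun j hj => by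
    obtain ⟨h1, h2⟩ := one_le_and_two_mul_le_of_mem_Icc_floor hj
    exact Nat.le_floor (by linarith)
  have hterm : ∀ j ∈ Finset.Icc 1 ⌊(k + 1) / 2⌋₊, gammaBinom k j * beta (j + a) (k - j + c) ≤
      2 * (n.choose j * beta (a + j) (c + (k - n) + (n - j : ℕ))) := fun j hj => by
    obtain ⟨h1, h2⟩ := one_le_and_two_mul_le_of_mem_Icc_floor hj
    rw [Nat.cast_sub (hjn j hj), show c + (k - n) + (n - j) = k - j + c by ring, add_comm a,
      ← mul_assoc]
    exact mul_le_mul_of_nonneg_right (gammaBinom_le_two_mul_choose (by exact_mod_cast h1) h2)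
      (beta_pos (by linarith) (by linarith)).le
  calc _ ≤ ∑ j ∈ Finset.Icc 1 ⌊(k + 1) / 2⌋₊,
          2 * (n.choose j * beta (a + j) (c + (k - n) + (n - j : ℕ))) := sum_le_sum hterm
    _ ≤ 2 * ∑ j ∈ range (n + 1), n.choose j * beta (a + j) (c + (k - n) + (n - j : ℕ)) := by
        rw [← mul_sum]
        refine mul_le_mul_of_nonneg_left (sum_le_sum_of_subset_of_nonneg
          (fun j hj => mem_range_succ_iff.2 (hjn j hj)) fun j _ _ => ?_) two_pos.le
        exact mul_nonneg (Nat.cast_nonneg _) (beta_pos (by positivity) (by positivity)).le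
    _ = 2 * beta a (c + (k - n)) := by rw [sum_range_choose_mul_beta n ha (by linarith)]
    _ ≤ 2 * beta a c := by gcongr; exact beta_le_beta_of_le_right ha hc (by linarith)

theorem sum_gammaBinom_mul_beta_add_beta_le {a c k : ℝ} (ha : 0 < a) (hc : 0 < c) (hk : 0 ≤ k) :
    ∑ j ∈ Finset.Icc 1 ⌊(k + 1) / 2⌋₊,
        gammaBinom k j * (beta (j + a) (k - j + c) + beta (j + c) (k - j + a)) ≤
      4 * beta a c := by
  simp only [mul_add, sum_add_distrib]
  linarith [sum_gammaBinom_mul_beta_le ha hc hk, sum_gammaBinom_mul_beta_le hc ha hk, beta_comm c a]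

theorem mul_le_of_div_Gamma_mul_div_Gamma_le {p q u v s Z : ℝ} (hu : 0 < u) (hv : 0 < v)
    (hs : u + v = s) (h : p / Γ u * (q / Γ v) ≤ Z) : p * q ≤ Z * Γ s * beta u v := by
  have hΓu := Gamma_pos_of_pos hu
  have hΓv := Gamma_pos_of_pos hv
  calc p * q = p / Γ u * (q / Γ v) * (Γ u * Γ v) := by field_simp
    _ ≤ Z * (Γ u * Γ v) := mul_le_mul_of_nonneg_right h (by positivity)
    _ = Z * Γ s * beta u v := by
        rw [beta, hs]
        field_simp [(Gamma_pos_of_pos (hs ▸ add_pos hu hv)).ne']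

theorem sum_gammaBinom_mul_moment_mul_moment_le {β b k Z : ℝ} {m z : ℝ → ℝ} (hβ : 0 < β)
    (hb : 0 < b) (hk : 0 ≤ k) (hz : ∀ κ, z κ = m κ / Γ (κ + b)) (hZ : 0 ≤ Z)
    (hzZ : ∀ j ∈ Finset.Icc 1 ⌊(k + 1) / 2⌋₊,
      max (z (j + β / 2) * z (k - j)) (z j * z (k - j + β / 2)) ≤ Z) :
    ∑ j ∈ Finset.Icc 1 ⌊(k + 1) / 2⌋₊,
        gammaBinom k j * (m (j + β / 2) * m (k - j) + m (k - j + β / 2) * m j) ≤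
      4 * beta (β / 2 + b) b * Γ (k + β / 2 + 2 * b) * Z := by
  have hbound : ∀ j ∈ Finset.Icc 1 ⌊(k + 1) / 2⌋₊,
      m (j + β / 2) * m (k - j) + m (k - j + β / 2) * m j ≤
        Z * Γ (k + β / 2 + 2 * b) * (beta (j + (β / 2 + b)) (k - j + b) +
          beta (j + b) (k - j + (β / 2 + b))) := fun j hj => by
    obtain ⟨h1, h2⟩ := one_le_and_two_mul_le_of_mem_Icc_floor hj
    obtain ⟨hZ₁, hZ₂⟩ := max_le_iff.1 (hzZ j hj)
    rw [hz, hz] at hZ₁ hZ₂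
    rw [← add_assoc, ← add_assoc, mul_add, mul_comm (m (k - j + β / 2))]
    exact add_le_add
      (mul_le_of_div_Gamma_mul_div_Gamma_le (by positivity) (by linarith) (by ring) hZ₁)
      (mul_le_of_div_Gamma_mul_div_Gamma_le (by positivity) (by linarith) (by ring) hZ₂)
  calc _ ≤ ∑ j ∈ Finset.Icc 1 ⌊(k + 1) / 2⌋₊, Z * Γ (k + β / 2 + 2 * b) *
          (gammaBinom k j * (beta (j + (β / 2 + b)) (k - j + b) +
            beta (j + b) (k - j + (β / 2 + b)))) := by
        refine sum_le_sum fun j hj => ?_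
        obtain ⟨h1, h2⟩ := one_le_and_two_mul_le_of_mem_Icc_floor hj
        rw [mul_left_comm]
        exact mul_le_mul_of_nonneg_left (hbound j hj)
          (gammaBinom_pos (by positivity) (by linarith)).le
    _ ≤ Z * Γ (k + β / 2 + 2 * b) * (4 * beta (β / 2 + b) b) := by
        rw [← mul_sum]
        exact mul_le_mul_of_nonneg_left (sum_gammaBinom_mul_beta_add_beta_le (by positivity) hb hk)
          (mul_nonneg hZ (Gamma_pos_of_pos (by positivity)).le)
    _ = _ := by ring

/-- **Combinatorial moment estimate** (Lemma 2.4, after Bobylev–Gamba–Panferov).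
With moments m_κ = ∫ f |v|^{2κ} and normalized moments z_κ = m_κ/Γ(κ+b), one has
S_k = Σ_{j=1}^{⌊(k+1)/2⌋} binom(k,j) (m_{j+β/2} m_{k−j} + m_{k−j+β/2} m_j)
      ≤ C_b Γ(k+β/2+2b) Z_k,
where Z_k = max_{1≤j≤⌊(k+1)/2⌋} { z_{j+β/2} z_{k−j}, z_j z_{k−j+β/2} } and
binom(k,j) = Γ(k+1)/(Γ(j+1)Γ(k−j+1)), with C_b depending only on b (and β). -/
theorem moment_sum_estimate
    (β b : ℝ) (hβ0 : 0 < β) (hb : 0 < b) :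
    ∃ Cb : ℝ, 0 < Cb ∧
      ∀ (d : ℕ) (f : Vel d → ℝ), Measurable f → (∀ v, 0 ≤ f v) →
      (∀ κ : ℝ, 0 ≤ κ → Integrable (fun v : Vel d => f v * ‖v‖ ^ (2 * κ))) →
      ∀ m z : ℝ → ℝ,
        (∀ κ : ℝ, m κ = ∫ v : Vel d, f v * ‖v‖ ^ (2 * κ)) →
        (∀ κ : ℝ, z κ = m κ / Real.Gamma (κ + b)) →
      ∀ (k : ℝ) (hk : 1 ≤ k),
        (∑ j ∈ Finset.Icc 1 ⌊(k + 1) / 2⌋₊,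
            (Real.Gamma (k + 1) / (Real.Gamma ((j:ℝ) + 1) * Real.Gamma (k - (j:ℝ) + 1))) *
              (m ((j:ℝ) + β / 2) * m (k - (j:ℝ)) + m (k - (j:ℝ) + β / 2) * m (j:ℝ)))
          ≤ Cb * Real.Gamma (k + β / 2 + 2 * b) *
            ((Finset.Icc 1 ⌊(k + 1) / 2⌋₊).sup'
              (Finset.nonempty_Icc.mpr (Nat.le_floor (by linarith)))
              (fun j => max (z ((j:ℝ) + β / 2) * z (k - (j:ℝ)))
                            (z (j:ℝ) * z (k - (j:ℝ) + β / 2)))) := by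
  refine ⟨4 * beta (β / 2 + b) b, mul_pos four_pos (beta_pos (by positivity) hb), ?_⟩
  intro d f _ hf _ m z hm hz k hk
  have hz0 : ∀ κ, 0 ≤ κ → 0 ≤ z κ := fun κ hκ => by
    rw [hz, hm]
    exact div_nonneg (integral_nonneg fun v => mul_nonneg (hf v) (by positivity))
      (Gamma_pos_of_pos (by linarith)).le
  have h1 : 1 ∈ Finset.Icc 1 ⌊(k + 1) / 2⌋₊ :=
    Finset.mem_Icc.2 ⟨le_rfl, Nat.le_floor (by push_cast; linarith)⟩
  refine sum_gammaBinom_mul_moment_mul_moment_le hβ0 hb (by linarith) hz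
    (le_sup'_of_le _ h1 (le_max_of_le_left (mul_nonneg (hz0 _ (by positivity)) (hz0 _ ?_))))
    fun j hj => le_sup' (fun j : ℕ => max (z (j + β / 2) * z (k - j)) (z j * z (k - j + β / 2))) hj
  push_cast
  linarith

end
end

section
/- Let f be absolutely continuous on [a,b], let [c,d] = f([a,b]), and let β be Lipschitz continuous on [c,d]. Let β' denote the a.e.-defined classical derivative of β, extended to all of [c,d] by assigning arbitrary finite values at points of nondifferentiability. Then β∘f is absolutely continuous on [a,b] and (β∘f)'(x) = β'(f(x)) · f'(x) for almost every x ∈ (a,b). -/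
/-!
Since β is Lipschitz, β ∘ f inherits absolute continuity from f. By Rademacher, β is
differentiable off a null set N. Where f x ∉ N the usual chain rule applies, and where f' x = 0 the
Lipschitz bound forces (β ∘ f)' x = 0. The remaining set {x | f' x ≠ 0, f x ∈ N} is null: near
such a point |y - x| ≤ 2 / |f' x| * |f y - f x|, so the set is a countable union of pieces on which
f is anti-Lipschitz, and anti-Lipschitz maps do not decrease Hausdorff measure.
-/

open MeasureTheory Real Filter Set
open scoped Topology NNReal

noncomputable section

/-- f is absolutely continuous on [a,b] (ε–δ definition with finite disjoint
families of subintervals). -/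
def AbsolutelyContinuousOnInterval' (f : ℝ → ℝ) (a b : ℝ) : Prop :=
  ∀ ε : ℝ, 0 < ε → ∃ δ : ℝ, 0 < δ ∧
    ∀ (n : ℕ) (I : Fin n → ℝ × ℝ),
      (∀ i, a ≤ (I i).1 ∧ (I i).1 ≤ (I i).2 ∧ (I i).2 ≤ b) →
      (Pairwise fun i j => Disjoint (Ioo (I i).1 (I i).2) (Ioo (I j).1 (I j).2)) →
      (∑ i, ((I i).2 - (I i).1)) < δ →
      (∑ i, |f (I i).2 - f (I i).1|) < ε

theorem LipschitzOnWith.comp_absolutelyContinuousOnInterval' {β f : ℝ → ℝ} {K : ℝ≥0}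
    {t : Set ℝ} {a b : ℝ} (hβ : LipschitzOnWith K β t) (hf : AbsolutelyContinuousOnInterval' f a b)
    (hmaps : MapsTo f (Icc a b) t) : AbsolutelyContinuousOnInterval' (β ∘ f) a b := by
  intro ε hε
  obtain ⟨δ, hδ, H⟩ := hf (ε / (K + 1)) (by positivity)
  refine ⟨δ, hδ, fun n I hI hdisj hlen => ?_⟩
  have hterm (i : Fin n) : |β (f (I i).2) - β (f (I i).1)| ≤ K * |f (I i).2 - f (I i).1| := by
    obtain ⟨ha, h12, hb⟩ := hI i
    simpa only [← Real.dist_eq] using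
      hβ.dist_le_mul _ (hmaps ⟨ha.trans h12, hb⟩) _ (hmaps ⟨ha, h12.trans hb⟩)
  calc ∑ i, |(β ∘ f) (I i).2 - (β ∘ f) (I i).1|
      ≤ ∑ i, (K + 1) * |f (I i).2 - f (I i).1| :=
        Finset.sum_le_sum fun i _ => (hterm i).trans (by gcongr; linarith)
    _ = (K + 1) * ∑ i, |f (I i).2 - f (I i).1| := (Finset.mul_sum ..).symm
    _ < (K + 1) * (ε / (K + 1)) := by gcongr; exact H n I hI hdisj hlen
    _ = ε := mul_div_cancel₀ ε (by positivity)

open scoped ENNReal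

section HausdorffMeasure

variable {X Y : Type*} [MetricSpace X] [MeasurableSpace X] [BorelSpace X]
  [MetricSpace Y] [MeasurableSpace Y] [BorelSpace Y] {f : X → Y} {s : Set X} {d : ℝ}

theorem hausdorffMeasure_le_of_le_mul_dist {K : ℝ≥0}
    (h : ∀ x ∈ s, ∀ y ∈ s, dist x y ≤ K * dist (f x) (f y)) (hd : 0 ≤ d) :
    μH[d] s ≤ (K : ℝ≥0∞) ^ d * μH[d] (f '' s) := by
  have hanti : AntilipschitzWith K (s.domRestrict f) :=
    AntilipschitzWith.of_le_mul_dist fun x y => h x x.2 y y.2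
  have := hanti.le_hausdorffMeasure_image hd univ
  rwa [← isometry_subtype_coe.hausdorffMeasure_image (Or.inl hd), image_univ, Subtype.range_coe,
    image_univ, range_domRestrict] at this

theorem hausdorffMeasure_eq_zero_of_eventually_dist_le [SecondCountableTopology X] (hd : 0 ≤ d)
    (hf : ∀ x ∈ s, ∃ K : ℝ≥0, ∀ᶠ y in 𝓝 x, dist y x ≤ K * dist (f y) (f x))
    (hs : μH[d] (f '' s) = 0) : μH[d] s = 0 := by
  set A : ℕ → ℕ → Set X := fun n k =>
    {x ∈ s | ∀ y, dist y x < (k + 1 : ℝ)⁻¹ → dist y x ≤ n * dist (f y) (f x)}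
  have hcover : s ⊆ ⋃ (n) (k), A n k := by
    intro x hx
    obtain ⟨K, hK⟩ := hf x hx
    obtain ⟨ε, hε, hball⟩ := Metric.eventually_nhds_iff.1 hK
    obtain ⟨n, hn⟩ := exists_nat_ge (K : ℝ)
    obtain ⟨k, hk⟩ := exists_nat_one_div_lt hε
    refine mem_iUnion₂.2 ⟨n, k, hx, fun y hy => ?_⟩
    calc dist y x ≤ K * dist (f y) (f x) := hball (hy.trans (by simpa using hk))
      _ ≤ n * dist (f y) (f x) := by gcongr
  refine measure_mono_null hcover (measure_iUnion_null fun n => measure_iUnion_null fun k => ?_)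
  refine measure_null_of_locally_null _ fun x _ => ?_
  set u := A n k ∩ Metric.ball x ((k + 1 : ℝ)⁻¹ / 2)
  refine ⟨u, inter_mem_nhdsWithin _ (Metric.ball_mem_nhds x (by positivity)), ?_⟩
  have hu : ∀ y ∈ u, ∀ z ∈ u, dist y z ≤ (n : ℝ≥0) * dist (f y) (f z) := fun y hy z hz =>
    hz.1.2 y <| calc dist y z ≤ dist y x + dist z x := dist_triangle_right y z x
      _ < (k + 1 : ℝ)⁻¹ / 2 + (k + 1 : ℝ)⁻¹ / 2 := add_lt_add hy.2 hz.2
      _ = (k + 1 : ℝ)⁻¹ := add_halves _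
  refine le_zero_iff.1 ((hausdorffMeasure_le_of_le_mul_dist hu hd).trans ?_)
  rw [measure_mono_null (image_mono fun y hy => hy.1.1) hs, mul_zero]

end HausdorffMeasure

theorem HasDerivAt.eventually_norm_mul_norm_sub_le {𝕜 F : Type*} [NontriviallyNormedField 𝕜]
    [NormedAddCommGroup F] [NormedSpace 𝕜 F] {f : 𝕜 → F} {f' : F} {x : 𝕜}
    (hf : HasDerivAt f f' x) : ∀ᶠ y in 𝓝 x, ‖f'‖ * ‖y - x‖ ≤ 2 * ‖f y - f x‖ := by
  rcases eq_or_ne f' 0 with rfl | hf'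
  · exact Eventually.of_forall fun y => by simp
  filter_upwards [hf.isLittleO.bound (half_pos (norm_pos_iff.2 hf'))] with y hy
  have := norm_sub_norm_le ((y - x) • f') ((y - x) • f' - (f y - f x))
  rw [sub_sub_cancel, norm_sub_rev, norm_smul] at this
  linarith

theorem hausdorffMeasure_setOf_hasDerivAt_ne_zero_mem {𝕜 F : Type*} [NontriviallyNormedField 𝕜]
    [MeasurableSpace 𝕜] [BorelSpace 𝕜] [SecondCountableTopology 𝕜]
    [NormedAddCommGroup F] [NormedSpace 𝕜 F] [MeasurableSpace F] [BorelSpace F]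
    {f : 𝕜 → F} {f' : 𝕜 → F} {N : Set F} {d : ℝ} (hd : 0 ≤ d) (hN : μH[d] N = 0) :
    μH[d] {x | HasDerivAt f (f' x) x ∧ f' x ≠ 0 ∧ f x ∈ N} = 0 := by
  refine hausdorffMeasure_eq_zero_of_eventually_dist_le hd (fun x ⟨hdx, hne, _⟩ => ?_)
    (measure_mono_null (image_subset_iff.2 fun x hx => hx.2.2) hN)
  refine ⟨2 / ‖f' x‖₊, hdx.eventually_norm_mul_norm_sub_le.mono fun y hy => ?_⟩
  rw [dist_eq_norm, dist_eq_norm, NNReal.coe_div, coe_nnnorm, div_mul_eq_mul_div,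
    le_div_iff₀' (norm_pos_iff.2 hne)]
  exact_mod_cast hy

theorem LipschitzOnWith.hasDerivAt_comp_of_hasDerivAt_zero {𝕜 E F : Type*}
    [NontriviallyNormedField 𝕜] [NormedAddCommGroup E] [NormedSpace 𝕜 E]
    [NormedAddCommGroup F] [NormedSpace 𝕜 F] {β : E → F} {K : ℝ≥0} {t : Set E} {f : 𝕜 → E}
    {x : 𝕜} (hβ : LipschitzOnWith K β t) (hft : ∀ᶠ y in 𝓝 x, f y ∈ t) (hf : HasDerivAt f 0 x) :
    HasDerivAt (β ∘ f) 0 x := by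
  have hβf : (fun y => β (f y) - β (f x)) =O[𝓝 x] fun y => f y - f x :=
    .of_bound K <| hft.mono fun y hy => by
      simpa only [← dist_eq_norm] using hβ.dist_le_mul _ hy _ hft.self_of_nhds
  have hf0 : (fun y => f y - f x) =o[𝓝 x] fun y => y - x := by
    simpa using hf.isLittleO
  simpa [hasDerivAt_iff_isLittleO] using hβf.trans_isLittleO hf0

theorem lipschitz_comp_absolutelyContinuous_chain_rule_general
    (a b c d : ℝ)
    (f : ℝ → ℝ) (hf : AbsolutelyContinuousOnInterval' f a b)
    (hcd : f '' (Icc a b) = Icc c d)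
    (β : ℝ → ℝ) (K : ℝ≥0) (hβ : LipschitzOnWith K β (Icc c d))
    (β' : ℝ → ℝ)
    (hβ' : ∀ y ∈ Icc c d,
      HasDerivWithinAt β (β' y) (Icc c d) y ∨ ¬ DifferentiableWithinAt ℝ β (Icc c d) y)
    (f' : ℝ → ℝ)
    (hf' : ∀ᵐ x ∂(volume.restrict (Ioo a b)), HasDerivAt f (f' x) x) :
    AbsolutelyContinuousOnInterval' (β ∘ f) a b ∧
    ∀ᵐ x ∂(volume.restrict (Ioo a b)),
      HasDerivAt (fun y => β (f y)) (β' (f x) * f' x) x := by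
  have hmaps : MapsTo f (Icc a b) (Icc c d) := hcd ▸ mapsTo_image f _
  refine ⟨hβ.comp_absolutelyContinuousOnInterval' hf hmaps, ?_⟩
  set N := {y | y ∈ Icc c d ∧ ¬ DifferentiableWithinAt ℝ β (Icc c d) y}
  have hN : μH[1] N = 0 := by
    rw [hausdorffMeasure_real]
    simpa only [ae_iff, Classical.not_imp] using hβ.ae_differentiableWithinAt_of_mem_real
  have hbad : volume {x | HasDerivAt f (f' x) x ∧ f' x ≠ 0 ∧ f x ∈ N} = 0 := by
    simpa only [hausdorffMeasure_real] using
      hausdorffMeasure_setOf_hasDerivAt_ne_zero_mem (𝕜 := ℝ) zero_le_one hN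
  filter_upwards [ae_restrict_mem measurableSet_Ioo, hf',
    ae_restrict_of_ae (measure_eq_zero_iff_ae_notMem.1 hbad)] with x hx hdx hgood
  have hnhds : Icc a b ∈ 𝓝 x := Icc_mem_nhds hx.1 hx.2
  have hfx : f x ∈ Icc c d := hmaps (Ioo_subset_Icc_self hx)
  by_cases hβx : DifferentiableWithinAt ℝ β (Icc c d) (f x)
  · have hβ'x := (hβ' (f x) hfx).resolve_right (not_not.2 hβx)
    exact (hβ'x.comp x hdx.hasDerivWithinAt hmaps).hasDerivAt hnhds
  · have hf'x : f' x = 0 := by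
      by_contra hne
      exact hgood ⟨hdx, hne, hfx, hβx⟩
    rw [hf'x, mul_zero]
    exact hβ.hasDerivAt_comp_of_hasDerivAt_zero (mem_of_superset hnhds hmaps) (hf'x ▸ hdx)

/-- **Chain rule for a Lipschitz function composed with an absolutely continuous
function** (Proposition A.1). If f ∈ AC[a,b], [c,d] = f([a,b]), β is Lipschitz on
[c,d], β' is the a.e.-defined classical derivative of β (with arbitrary finite
values at points of nondifferentiability) and f' is the a.e. derivative of f,
then β∘f ∈ AC[a,b] and (β∘f)'(x) = β'(f(x)) f'(x) for a.e. x ∈ (a,b). -/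
theorem lipschitz_comp_absolutelyContinuous_chain_rule
    (a b c d : ℝ) (hab : a ≤ b)
    (f : ℝ → ℝ) (hf : AbsolutelyContinuousOnInterval' f a b)
    (hcd : f '' (Icc a b) = Icc c d)
    (β : ℝ → ℝ) (K : ℝ≥0) (hβ : LipschitzOnWith K β (Icc c d))
    (β' : ℝ → ℝ)
    (hβ' : ∀ y ∈ Icc c d,
      HasDerivWithinAt β (β' y) (Icc c d) y ∨ ¬ DifferentiableWithinAt ℝ β (Icc c d) y)
    (f' : ℝ → ℝ)
    (hf' : ∀ᵐ x ∂(volume.restrict (Ioo a b)), HasDerivAt f (f' x) x) :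
    AbsolutelyContinuousOnInterval' (β ∘ f) a b ∧
    ∀ᵐ x ∂(volume.restrict (Ioo a b)),
      HasDerivAt (fun y => β (f y)) (β' (f x) * f' x) x :=
  lipschitz_comp_absolutelyContinuous_chain_rule_general a b c d f hf hcd β K hβ β' hβ' f' hf'

end
end

section
/- Let f be absolutely continuous on [a,b] and let N ⊂ ℝ be a set of Lebesgue measure zero. Then f'(x) = 0 for almost every x ∈ f⁻¹(N). In particular, if β is Lipschitz on f([a,b]) and A = {y ∈ [a,b] : β is not differentiable at f(y)}, then f' = 0 a.e. on A. -/
open MeasureTheory Real Filter Set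
open scoped Topology NNReal

noncomputable section

/-- f is absolutely continuous on [a,b] (ε–δ definition with finite disjoint
families of subintervals). -/
def AbsolutelyContinuousOnIntervalEps (f : ℝ → ℝ) (a b : ℝ) : Prop :=
  ∀ ε : ℝ, 0 < ε → ∃ δ : ℝ, 0 < δ ∧
    ∀ (n : ℕ) (I : Fin n → ℝ × ℝ),
      (∀ i, a ≤ (I i).1 ∧ (I i).1 ≤ (I i).2 ∧ (I i).2 ≤ b) →
      (Pairwise fun i j => Disjoint (Ioo (I i).1 (I i).2) (Ioo (I j).1 (I j).2)) →
      (∑ i, ((I i).2 - (I i).1)) < δ →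
      (∑ i, |f (I i).2 - f (I i).1|) < ε

/-!
A map well approximated by an invertible linear map `A` on a set `t` multiplies the measure of `t`
by at least about `|det A|`; partitioning into such pieces, a set on which `f` has invertible
derivative and whose image is null is itself null. In dimension one this says that at almost
every `x` with `f x ∈ N`, either `f` is not differentiable or `deriv f x = 0`. Because `deriv f`
is measurable, this survives restricting Lebesgue measure to the possibly non-measurable set
`f ⁻¹' N`. For `β`, take `N` to be the non-differentiability set of a Lipschitz extension of `β`,
null by Rademacher's theorem.
-/

section Jacobian

open scoped ENNReal

variable {E : Type*} [NormedAddCommGroup E] [NormedSpace ℝ E] [FiniteDimensional ℝ E]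
  [MeasurableSpace E] [BorelSpace E] (μ : Measure E) [μ.IsAddHaarMeasure]

-- Stated for every `A`, with `A.det ≠ 0` inside, so that `choose` yields one precision function.
theorem exists_pos_addHaar_eq_zero_of_approximatesLinearOn (f : E → E) (A : E →L[ℝ] E) :
    ∃ δ : ℝ≥0, 0 < δ ∧ (A.det ≠ 0 → ∀ t, ApproximatesLinearOn f A t δ →
      μ (f '' t) = 0 → μ t = 0) := by
  by_cases hA : A.det = 0
  · exact ⟨1, one_pos, fun h => absurd hA h⟩
  have hdet : 0 < |A.det| := abs_pos.2 hA
  have hm : ((|A.det| / 2).toNNReal : ℝ≥0∞) < ENNReal.ofReal |A.det| :=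
    (ENNReal.ofReal_lt_ofReal_iff hdet).2 (half_lt_self hdet)
  obtain ⟨δ, hδ, hδpos⟩ :=
    ((mul_le_addHaar_image_of_lt_det μ A hm).and self_mem_nhdsWithin).exists
  refine ⟨δ, hδpos, fun _ t ht himage => ?_⟩
  have := hδ t f ht
  rw [himage, nonpos_iff_eq_zero, mul_eq_zero] at this
  exact this.resolve_left (by simpa using hA)

theorem addHaar_eq_zero_of_addHaar_image_eq_zero {f : E → E} {s : Set E} {f' : E → E →L[ℝ] E}
    (hf' : ∀ x ∈ s, HasFDerivWithinAt f (f' x) s x) (hdet : ∀ x ∈ s, (f' x).det ≠ 0)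
    (hs : μ (f '' s) = 0) : μ s = 0 := by
  rcases s.eq_empty_or_nonempty with rfl | hne
  · exact measure_empty
  choose δ hδpos hδ using exists_pos_addHaar_eq_zero_of_approximatesLinearOn μ f
  obtain ⟨t, A, -, -, hst, hA, hAf'⟩ :=
    exists_partition_approximatesLinearOn_of_hasFDerivWithinAt f s f' hf' δ
      fun A => (hδpos A).ne'
  rw [← inter_eq_left.2 hst, inter_iUnion]
  refine measure_iUnion_null fun n => ?_
  obtain ⟨y, hy, hAy⟩ := hAf' hne n
  exact hδ (A n) (hAy ▸ hdet y hy) _ (hA n) (measure_mono_null (image_mono inter_subset_left) hs)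

end Jacobian

theorem ae_deriv_eq_zero_of_apply_mem (f : ℝ → ℝ) {N : Set ℝ} (hN : volume N = 0) :
    ∀ᵐ x, DifferentiableAt ℝ f x → f x ∈ N → deriv f x = 0 := by
  rw [ae_iff]
  simp only [Classical.not_imp]
  refine addHaar_eq_zero_of_addHaar_image_eq_zero volume
    (f' := fun x => ContinuousLinearMap.toSpanSingleton ℝ (deriv f x))
    (fun x hx => hx.1.hasDerivAt.hasFDerivAt.hasFDerivWithinAt)
    (fun x hx => by simpa only [ContinuousLinearMap.det_toSpanSingleton] using hx.2.2)
    (measure_mono_null ?_ hN)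
  rintro _ ⟨x, hx, rfl⟩
  exact hx.2.1

theorem ae_restrict_inter_preimage_eq_zero_of_hasDerivAt {f f' : ℝ → ℝ} {U N : Set ℝ}
    (hf' : ∀ᵐ x ∂volume.restrict U, HasDerivAt f (f' x) x) (hN : volume N = 0) :
    ∀ᵐ x ∂volume.restrict (U ∩ f ⁻¹' N), f' x = 0 := by
  have hdiff : ∀ᵐ x, x ∈ U → DifferentiableAt ℝ f x :=
    (ae_restrict_iff (measurableSet_of_differentiableAt ℝ f)).1
      (hf'.mono fun x hx => hx.differentiableAt)
  have hderiv : ∀ᵐ x ∂volume.restrict (U ∩ f ⁻¹' N), deriv f x = 0 := by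
    rw [ae_restrict_iff (p := fun x => deriv f x = 0)
      (measurable_deriv f (measurableSet_singleton 0))]
    filter_upwards [hdiff, ae_deriv_eq_zero_of_apply_mem f hN] with x hxU hx0 hx
    exact hx0 (hxU hx.1) hx.2
  filter_upwards [ae_restrict_of_ae_restrict_of_subset inter_subset_left hf', hderiv]
    with x hx hx0
  rw [← hx.deriv, hx0]

theorem deriv_zero_ae_on_preimage_of_null_general
    (a b : ℝ)
    (f : ℝ → ℝ)
    (f' : ℝ → ℝ)
    (hf' : ∀ᵐ x ∂(volume.restrict (Ioo a b)), HasDerivAt f (f' x) x)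
    (N : Set ℝ) (hN : volume N = 0) :
    (∀ᵐ x ∂(volume.restrict ((Ioo a b) ∩ f ⁻¹' N)), f' x = 0) ∧
    ∀ (β : ℝ → ℝ) (K : ℝ≥0), LipschitzOnWith K β (f '' (Icc a b)) →
      ∀ᵐ x ∂(volume.restrict ((Ioo a b) ∩
          {y : ℝ | ¬ DifferentiableWithinAt ℝ β (f '' (Icc a b)) (f y)})),
        f' x = 0 := by
  refine ⟨ae_restrict_inter_preimage_eq_zero_of_hasDerivAt hf' hN, fun β K hβ => ?_⟩
  obtain ⟨g, hg, hgβ⟩ := hβ.extend_real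
  refine ae_restrict_of_ae_restrict_of_subset ?_
    (ae_restrict_inter_preimage_eq_zero_of_hasDerivAt hf' (ae_iff.1 hg.ae_differentiableAt_real))
  rintro y ⟨hy, hβy⟩
  refine ⟨hy, fun hgy => hβy ?_⟩
  exact hgy.differentiableWithinAt.congr (fun z hz => hgβ hz)
    (hgβ ⟨y, Ioo_subset_Icc_self hy, rfl⟩)

/-- **Vanishing of the derivative on preimages of null sets** (the claim inside the
proof of Proposition A.1). If f is absolutely continuous on [a,b], f' is its a.e.
derivative and N is Lebesgue-null, then f' = 0 a.e. on f⁻¹(N). In particular, if β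
is Lipschitz on f([a,b]) and A is the set of y ∈ [a,b] where β is not
differentiable (within f([a,b])) at f(y), then f' = 0 a.e. on A. -/
theorem deriv_zero_ae_on_preimage_of_null
    (a b : ℝ) (hab : a ≤ b)
    (f : ℝ → ℝ) (hf : AbsolutelyContinuousOnIntervalEps f a b)
    (f' : ℝ → ℝ)
    (hf' : ∀ᵐ x ∂(volume.restrict (Ioo a b)), HasDerivAt f (f' x) x)
    (N : Set ℝ) (hN : volume N = 0) :
    (∀ᵐ x ∂(volume.restrict ((Ioo a b) ∩ f ⁻¹' N)), f' x = 0) ∧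
    ∀ (β : ℝ → ℝ) (K : ℝ≥0), LipschitzOnWith K β (f '' (Icc a b)) →
      ∀ᵐ x ∂(volume.restrict ((Ioo a b) ∩
          {y : ℝ | ¬ DifferentiableWithinAt ℝ β (f '' (Icc a b)) (f y)})),
        f' x = 0 :=
  deriv_zero_ae_on_preimage_of_null_general a b f f' hf' N hN

end
end
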